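/- There exists a finite point set S with G¹(S) connected such that for every d with 1 ≤ d < 5 − (2/3)√35, some valid Yao edge selection makes Y₃[G^d(S)] disconnected. -/

import Mathlib

/-- Euclidean distance between two points of the plane `ℝ × ℝ`. -/
noncomputable def dE (p q : ℝ × ℝ) : ℝ := Real.sqrt ((p.1 - q.1)^2 + (p.2 - q.2)^2)

lemma dE_comm (p q : ℝ × ℝ) : dE p q = dE q p := by
  unfold dE
  rw [show (p.1 - q.1)^2 = (q.1 - p.1)^2 by ring, show (p.2 - q.2)^2 = (q.2 - p.2)^2 by ring]

/-- The `d`-radius disk graph on a finite point set `S`: two distinct points are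
adjacent iff their Euclidean distance is at most `d`. -/
noncomputable def diskGraph (S : Finset (ℝ × ℝ)) (d : ℝ) :
    SimpleGraph {p : ℝ × ℝ // p ∈ S} where
  Adj p q := p ≠ q ∧ dE p.1 q.1 ≤ d
  symm := ⟨by
    rintro p q ⟨h1, h2⟩
    exact ⟨h1.symm, by rwa [dE_comm]⟩⟩
  loopless := ⟨fun p h => h.1 rfl⟩

/-- The three unit vectors at angles `0°, 120°, 240°`, delimiting the three
half-open 120° cones used to build `Y₃`. -/
noncomputable def u3 : Fin 3 → ℝ × ℝ
  | 0 => ((1 : ℝ), (0 : ℝ))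
  | 1 => (-(1/2 : ℝ), Real.sqrt 3 / 2)
  | 2 => (-(1/2 : ℝ), -(Real.sqrt 3 / 2))

/-- `q` lies in the `i`-th half-open 120° cone of `p`: the cone spanned by the
rays `u3 i` and `u3 (i+1)`, including the first ray and excluding the second. -/
def inCone3 (i : Fin 3) (p q : ℝ × ℝ) : Prop :=
  ∃ s t : ℝ, 0 < s ∧ 0 ≤ t ∧ q - p = s • u3 i + t • u3 (i + 1)

/-- A valid Yao edge selection for `Y₃[G^d(S)]`: in each nonempty cone of each point
of `S`, a closest point of `S` within distance `d` is selected. -/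
structure YaoSel3 (S : Finset (ℝ × ℝ)) (d : ℝ) where
  sel : ℝ × ℝ → Fin 3 → Option (ℝ × ℝ)
  sel_mem : ∀ p i q, sel p i = some q →
    p ∈ S ∧ q ∈ S ∧ inCone3 i p q ∧ dE p q ≤ d
  sel_shortest : ∀ p i q, sel p i = some q →
    ∀ r ∈ S, inCone3 i p r → dE p r ≤ d → dE p q ≤ dE p r
  sel_nonempty : ∀ p ∈ S, ∀ (i : Fin 3), ∀ q ∈ S, inCone3 i p q → dE p q ≤ d →
    (sel p i).isSome

/-- The undirected Yao graph `Y₃[G^d(S)]` induced by a selection `Y`. -/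
noncomputable def yaoGraph3 (S : Finset (ℝ × ℝ)) (d : ℝ) (Y : YaoSel3 S d) :
    SimpleGraph {p : ℝ × ℝ // p ∈ S} where
  Adj p q := p ≠ q ∧
    ((∃ i, Y.sel p.1 i = some q.1) ∨ (∃ i, Y.sel q.1 i = some p.1))
  symm := ⟨by rintro p q ⟨h1, h2⟩; exact ⟨h1.symm, h2.symm⟩⟩
  loopless := ⟨fun p h => h.1 rfl⟩

/-!
Four points suffice: `p = (0,0)`, `q = (0,1)`, `x = (1,0)`, `y = (1/2, 24/25)`. For
`1 ≤ d < 27/25` the disk graph `G^d` is the path `x – p – q – y`, and at every point all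
`G^d`-neighbours lie in one cone. In that cone `p` sees `x` and `q` at the same distance `1`,
so it may select `x`, while `q` selects the strictly closer `y`. Hence no point selects the
edge `pq`, and `Y₃` splits into `{p, x}` and `{q, y}`. Finally `5 - (2/3)√35 < 27/25`.
-/

section Cones

variable {p q : ℝ × ℝ}

lemma inCone3_zero_iff :
    inCone3 0 p q ↔ 0 ≤ (q - p).2 ∧ 0 < √3 * (q - p).1 + (q - p).2 := by
  have h3 : 0 < √3 := by positivity
  have h33 : √3 * √3 = 3 := Real.mul_self_sqrt (by norm_num)
  constructor
  · rintro ⟨s, t, hs, ht, h⟩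
    simp only [h, u3, Prod.fst_add, Prod.snd_add, Prod.smul_fst, Prod.smul_snd,
      smul_eq_mul, show (0 : Fin 3) + 1 = 1 from rfl]
    constructor <;> nlinarith
  · rintro ⟨hb, ha⟩
    refine ⟨(√3 * (q - p).1 + (q - p).2) / √3, 2 * (q - p).2 / √3, by positivity,
      by positivity, ?_⟩
    ext <;> simp only [u3, Prod.fst_add, Prod.snd_add, Prod.smul_fst, Prod.smul_snd,
      smul_eq_mul, show (0 : Fin 3) + 1 = 1 from rfl] <;> field_simp <;> nlinarith

lemma inCone3_one_iff :
    inCone3 1 p q ↔ √3 * (q - p).1 < (q - p).2 ∧ √3 * (q - p).1 + (q - p).2 ≤ 0 := by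
  have h3 : 0 < √3 := by positivity
  have h33 : √3 * √3 = 3 := Real.mul_self_sqrt (by norm_num)
  constructor
  · rintro ⟨s, t, hs, ht, h⟩
    simp only [h, u3, Prod.fst_add, Prod.snd_add, Prod.smul_fst, Prod.smul_snd,
      smul_eq_mul, show (1 : Fin 3) + 1 = 2 from rfl]
    constructor <;> nlinarith
  · rintro ⟨hb, ha⟩
    refine ⟨((q - p).2 - √3 * (q - p).1) / √3, -(√3 * (q - p).1 + (q - p).2) / √3,
      div_pos (by linarith) h3, div_nonneg (by linarith) h3.le, ?_⟩
    ext <;> simp only [u3, Prod.fst_add, Prod.snd_add, Prod.smul_fst, Prod.smul_snd,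
      smul_eq_mul, show (1 : Fin 3) + 1 = 2 from rfl] <;> field_simp <;> nlinarith

lemma inCone3_two_iff :
    inCone3 2 p q ↔ (q - p).2 < 0 ∧ (q - p).2 ≤ √3 * (q - p).1 := by
  have h3 : 0 < √3 := by positivity
  have h33 : √3 * √3 = 3 := Real.mul_self_sqrt (by norm_num)
  constructor
  · rintro ⟨s, t, hs, ht, h⟩
    simp only [h, u3, Prod.fst_add, Prod.snd_add, Prod.smul_fst, Prod.smul_snd,
      smul_eq_mul, show (2 : Fin 3) + 1 = 0 from rfl]
    constructor <;> nlinarith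
  · rintro ⟨hb, ha⟩
    refine ⟨-2 * (q - p).2 / √3, (√3 * (q - p).1 - (q - p).2) / √3,
      div_pos (by linarith) h3, div_nonneg (by linarith) h3.le, ?_⟩
    ext <;> simp only [u3, Prod.fst_add, Prod.snd_add, Prod.smul_fst, Prod.smul_snd,
      smul_eq_mul, show (2 : Fin 3) + 1 = 0 from rfl] <;> field_simp <;> nlinarith

lemma not_inCone3_self (i : Fin 3) (p : ℝ × ℝ) : ¬ inCone3 i p p := by
  fin_cases i <;> simp [inCone3_zero_iff, inCone3_one_iff, inCone3_two_iff]

lemma inCone3_unique {i j : Fin 3} (hi : inCone3 i p q) (hj : inCone3 j p q) : i = j := by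
  fin_cases i <;> fin_cases j <;>
    simp_all only [Fin.zero_eta, Fin.mk_one, Fin.reduceFinMk, inCone3_zero_iff,
      inCone3_one_iff, inCone3_two_iff] <;>
    linarith

end Cones

section NearestSelection

variable {S : Finset (ℝ × ℝ)} {d : ℝ} {f : ℝ × ℝ → ℝ × ℝ}
  (hf : ∀ z ∈ S, f z ∈ S ∧ dE z (f z) ≤ d)
  (hnear : ∀ z ∈ S, ∀ r ∈ S, r ≠ z → dE z r ≤ d →
    dE z (f z) ≤ dE z r ∧ ∃ i, inCone3 i z r ∧ inCone3 i z (f z))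

noncomputable def YaoSel3.ofNearest : YaoSel3 S d := by
  classical
  exact
  { sel := fun z i => if z ∈ S ∧ inCone3 i z (f z) then some (f z) else none
    sel_mem := by
      intro z i w h
      split_ifs at h with hz
      obtain rfl := Option.some_inj.mp h
      exact ⟨hz.1, (hf z hz.1).1, hz.2, (hf z hz.1).2⟩
    sel_shortest := by
      intro z i w h r hr hcone hrd
      split_ifs at h with hz
      obtain rfl := Option.some_inj.mp h
      have hrz : r ≠ z := by rintro rfl; exact not_inCone3_self _ _ hcone
      exact (hnear z hz.1 r hr hrz hrd).1
    sel_nonempty := by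
      intro z hz i r hr hcone hrd
      have hrz : r ≠ z := by rintro rfl; exact not_inCone3_self _ _ hcone
      obtain ⟨j, hjr, hjf⟩ := (hnear z hz r hr hrz hrd).2
      obtain rfl := inCone3_unique hcone hjr
      simp [hz, hjf] }

lemma yaoGraph3_ofNearest_adj {u v : {z // z ∈ S}}
    (h : (yaoGraph3 S d (YaoSel3.ofNearest hf hnear)).Adj u v) :
    v.1 = f u.1 ∨ u.1 = f v.1 := by
  obtain ⟨-, ⟨i, hi⟩ | ⟨i, hi⟩⟩ := h <;>
    simp only [YaoSel3.ofNearest] at hi <;> split_ifs at hi <;>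
    simp only [Option.some_inj] at hi
  · exact Or.inl hi.symm
  · exact Or.inr hi.symm

end NearestSelection

lemma SimpleGraph.not_connected_of_adj_iff {V : Type*} {G : SimpleGraph V} (P : V → Prop)
    (hP : ∀ u v, G.Adj u v → (P u ↔ P v)) {a b : V} (ha : P a) (hb : ¬ P b) :
    ¬ G.Connected := by
  intro hG
  obtain ⟨w⟩ := hG.preconnected a b
  obtain ⟨e, -, he, he'⟩ := w.exists_boundary_dart {v | P v} ha hb
  exact he' ((hP _ _ e.adj).1 he)

lemma dE_le_iff {p q : ℝ × ℝ} {c : ℝ} (hc : 0 ≤ c) :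
    dE p q ≤ c ↔ (p.1 - q.1) ^ 2 + (p.2 - q.2) ^ 2 ≤ c ^ 2 :=
  Real.sqrt_le_left hc

lemma le_dE_iff {p q : ℝ × ℝ} {c : ℝ} (hc : 0 ≤ c) :
    c ≤ dE p q ↔ c ^ 2 ≤ (p.1 - q.1) ^ 2 + (p.2 - q.2) ^ 2 :=
  Real.le_sqrt hc (by positivity)

namespace Y3Gadget

noncomputable section

def p : ℝ × ℝ := (0, 0)
def q : ℝ × ℝ := (0, 1)
def x : ℝ × ℝ := (1, 0)
def y : ℝ × ℝ := (1 / 2, 24 / 25)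

def S : Finset (ℝ × ℝ) := {p, q, x, y}

def partner (z : ℝ × ℝ) : ℝ × ℝ := by
  classical
  exact if z = p then x else if z = x then p else if z = q then y else q

lemma mem_S {z : ℝ × ℝ} : z ∈ S ↔ z = p ∨ z = q ∨ z = x ∨ z = y := by
  simp [S]

lemma p_mem : p ∈ S := mem_S.2 (Or.inl rfl)
lemma q_mem : q ∈ S := mem_S.2 (Or.inr (Or.inl rfl))

lemma p_ne_q : p ≠ q := by simp [p, q, Prod.ext_iff]
lemma p_ne_x : p ≠ x := by simp [p, x, Prod.ext_iff]
lemma q_ne_x : q ≠ x := by simp [q, x, Prod.ext_iff]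
lemma q_ne_y : q ≠ y := by norm_num [q, y, Prod.ext_iff]
lemma y_ne_p : y ≠ p := by norm_num [y, p, Prod.ext_iff]
lemma y_ne_x : y ≠ x := by norm_num [y, x, Prod.ext_iff]

lemma partner_p : partner p = x := by simp [partner]
lemma partner_x : partner x = p := by simp [partner, p_ne_x.symm]
lemma partner_q : partner q = y := by simp [partner, p_ne_q.symm, q_ne_x]
lemma partner_y : partner y = q := by
  simp [partner, p, q, x, y, Prod.ext_iff]

lemma dE_p_x : dE p x = 1 := by simp [dE, p, x]
lemma dE_p_q : dE p q = 1 := by simp [dE, p, q]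
lemma dE_q_y_le : dE q y ≤ 1 := by rw [dE_le_iff zero_le_one]; norm_num [q, y]

lemma far_p_y : 27 / 25 ≤ dE p y := by rw [le_dE_iff (by norm_num)]; norm_num [p, y]
lemma far_x_y : 27 / 25 ≤ dE x y := by rw [le_dE_iff (by norm_num)]; norm_num [x, y]
lemma far_q_x : 27 / 25 ≤ dE q x := by rw [le_dE_iff (by norm_num)]; norm_num [q, x]

lemma partner_mem {z : ℝ × ℝ} (hz : z ∈ S) : partner z ∈ S := by
  rcases mem_S.1 hz with rfl | rfl | rfl | rfl <;>
    simp [partner_p, partner_q, partner_x, partner_y, S]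

lemma dE_partner_le_one {z : ℝ × ℝ} (hz : z ∈ S) : dE z (partner z) ≤ 1 := by
  rcases mem_S.1 hz with rfl | rfl | rfl | rfl
  · rw [partner_p, dE_p_x]
  · rw [partner_q]; exact dE_q_y_le
  · rw [partner_x, dE_comm, dE_p_x]
  · rw [partner_y, dE_comm]; exact dE_q_y_le

lemma eq_partner_of_dE_lt {z r : ℝ × ℝ} (hz : z ∈ S) (hr : r ∈ S) (hrz : r ≠ z)
    (hd : dE z r < 27 / 25) : r = partner z ∨ (z = p ∧ r = q) ∨ (z = q ∧ r = p) := by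
  have := far_p_y; have := far_x_y; have := far_q_x
  rcases mem_S.1 hz with rfl | rfl | rfl | rfl <;> rcases mem_S.1 hr with rfl | rfl | rfl | rfl <;>
    simp only [partner_p, partner_q, partner_x, partner_y, true_and, and_true, true_or,
      or_true] <;>
    first | exact absurd rfl hrz | (exfalso; rw [dE_comm] at hd; linarith) | (exfalso; linarith)

lemma inCone3_p_x : inCone3 0 p x := by rw [inCone3_zero_iff]; norm_num [p, x]
lemma inCone3_p_q : inCone3 0 p q := by rw [inCone3_zero_iff]; norm_num [p, q]
lemma inCone3_q_y : inCone3 2 q y := by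
  rw [inCone3_two_iff]; norm_num [q, y]; linarith [Real.sqrt_nonneg 3]
lemma inCone3_q_p : inCone3 2 q p := by rw [inCone3_two_iff]; norm_num [q, p]
lemma inCone3_x_p : inCone3 1 x p := by rw [inCone3_one_iff]; norm_num [x, p]
lemma inCone3_y_q : inCone3 1 y q := by
  have : (2 / 25 : ℝ) ≤ √3 := by
    rw [Real.le_sqrt (by norm_num) (by norm_num)]; norm_num
  rw [inCone3_one_iff]; norm_num [y, q]; constructor <;> linarith

lemma exists_inCone3_partner {z : ℝ × ℝ} (hz : z ∈ S) : ∃ i, inCone3 i z (partner z) := by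
  rcases mem_S.1 hz with rfl | rfl | rfl | rfl
  · exact ⟨0, partner_p ▸ inCone3_p_x⟩
  · exact ⟨2, partner_q ▸ inCone3_q_y⟩
  · exact ⟨1, partner_x ▸ inCone3_x_p⟩
  · exact ⟨1, partner_y ▸ inCone3_y_q⟩

lemma partner_nearest {d : ℝ} (hd : d < 27 / 25) {z r : ℝ × ℝ} (hz : z ∈ S) (hr : r ∈ S)
    (hrz : r ≠ z) (hrd : dE z r ≤ d) :
    dE z (partner z) ≤ dE z r ∧ ∃ i, inCone3 i z r ∧ inCone3 i z (partner z) := by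
  rcases eq_partner_of_dE_lt hz hr hrz (hrd.trans_lt hd) with rfl | ⟨rfl, rfl⟩ | ⟨rfl, rfl⟩
  · obtain ⟨i, hi⟩ := exists_inCone3_partner hz
    exact ⟨le_rfl, i, hi, hi⟩
  · rw [partner_p, dE_p_x, dE_p_q]
    exact ⟨le_rfl, 0, inCone3_p_q, inCone3_p_x⟩
  · rw [partner_q, dE_comm q p, dE_p_q]
    exact ⟨dE_q_y_le, 2, inCone3_q_p, inCone3_q_y⟩

lemma partner_eq_p_or_x_iff {z : ℝ × ℝ} (hz : z ∈ S) :
    partner z = p ∨ partner z = x ↔ z = p ∨ z = x := by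
  rcases mem_S.1 hz with rfl | rfl | rfl | rfl <;>
    simp [partner_p, partner_q, partner_x, partner_y, p_ne_q.symm, q_ne_x, y_ne_p, y_ne_x]

lemma diskGraph_one_connected : (diskGraph S 1).Connected := by
  have reachable_of_dE {a b : ℝ × ℝ} (ha : a ∈ S) (hb : b ∈ S) (hab : a ≠ b)
      (h : dE a b ≤ 1) : (diskGraph S 1).Reachable ⟨a, ha⟩ ⟨b, hb⟩ :=
    SimpleGraph.Adj.reachable ⟨fun e => hab (congrArg Subtype.val e), h⟩
  have hpq := reachable_of_dE p_mem q_mem p_ne_q dE_p_q.le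
  refine (SimpleGraph.connected_iff_exists_forall_reachable _).2
    ⟨⟨p, p_mem⟩, fun ⟨z, hz⟩ => ?_⟩
  rcases mem_S.1 hz with rfl | rfl | rfl | rfl
  · rfl
  · exact hpq
  · exact reachable_of_dE p_mem hz p_ne_x dE_p_x.le
  · exact hpq.trans (reachable_of_dE q_mem hz q_ne_y dE_q_y_le)

lemma exists_yaoSel3_not_connected {d : ℝ} (hd1 : 1 ≤ d) (hd : d < 27 / 25) :
    ∃ Y : YaoSel3 S d, ¬ (yaoGraph3 S d Y).Connected := by
  refine ⟨YaoSel3.ofNearest (f := partner)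
    (fun z hz => ⟨partner_mem hz, (dE_partner_le_one hz).trans hd1⟩)
    (fun z hz r hr hrz hrd => partner_nearest hd hz hr hrz hrd), ?_⟩
  refine SimpleGraph.not_connected_of_adj_iff (fun z => z.1 = p ∨ z.1 = x)
    (fun u v huv => ?_) (a := ⟨p, p_mem⟩) (b := ⟨q, q_mem⟩)
    (Or.inl rfl) (by simp [p_ne_q.symm, q_ne_x])
  rcases yaoGraph3_ofNearest_adj _ _ huv with h | h
  · rw [h, partner_eq_p_or_x_iff u.2]
  · rw [h, partner_eq_p_or_x_iff v.2]

end

end Y3Gadget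

lemma five_sub_two_thirds_sqrt_35_lt : 5 - 2 / 3 * √35 < 27 / 25 := by
  have : (147 / 25 : ℝ) < √35 := by rw [Real.lt_sqrt (by norm_num)]; norm_num
  linarith

/-- There exists a finite point set `S` with `G¹(S)` connected, such that for every
`d` with `1 ≤ d < 5 - (2/3)√35` some valid Yao edge selection makes `Y₃[G^d(S)]`
disconnected. -/
theorem y3_lower_bound :
    ∃ S : Finset (ℝ × ℝ), (diskGraph S 1).Connected ∧
      ∀ d : ℝ, 1 ≤ d → d < 5 - (2/3) * Real.sqrt 35 →
        ∃ Y : YaoSel3 S d, ¬ (yaoGraph3 S d Y).Connected :=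
  ⟨Y3Gadget.S, Y3Gadget.diskGraph_one_connected, fun _ hd1 hd =>
    Y3Gadget.exists_yaoSel3_not_connected hd1 (hd.trans five_sub_two_thirds_sqrt_35_lt)⟩
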